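/- Let (B_i) be a sequence of balls in [0,1]^d ⊆ ℝ^d whose diameters tend to 0 and such that the Lebesgue measure of limsup_{i→∞} B_i equals 1. Then there exists κ₂ > 0 such that for every axis-parallel closed cube C ⊆ [0,1]^d there exists a finite subfamily of balls B_{n_1}, …, B_{n_k} with B_{n_j} ⊆ C for all j, the dilated balls 3B_{n_1}, …, 3B_{n_k} pairwise disjoint, and Σ_{j=1}^k λ(B_{n_j}) ≥ κ₂ · λ(C). -/

import Mathlib

open MeasureTheory Metric Set Filter ENNReal

/-- `limsup` of a sequence of sets: `⋂ n, ⋃ i ≥ n, A i`. -/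
def slimsup {X : Type*} (A : ℕ → Set X) : Set X :=
  ⋂ n, ⋃ i, ⋃ (_ : n ≤ i), A i

/-- The unit cube `[0,1]^d` in `ℝ^d`. -/
def unitCube (d : ℕ) : Set (EuclideanSpace ℝ (Fin d)) :=
  {x | ∀ i, x i ∈ Set.Icc (0 : ℝ) 1}

/-- The generalized singular value function
`φ^s(E) = sup_μ inf_{x ∈ E} inf_{r > 0} r^s / μ(B_r(x))`,
the supremum over Borel probability measures carried by `E`. -/
noncomputable def phi {d : ℕ} (s : ℝ) (E : Set (EuclideanSpace ℝ (Fin d))) : ℝ≥0∞ :=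
  ⨆ (μ : Measure (EuclideanSpace ℝ (Fin d))) (_ : IsProbabilityMeasure μ) (_ : μ Eᶜ = 0),
    ⨅ (x : EuclideanSpace ℝ (Fin d)) (_ : x ∈ E) (r : ℝ) (_ : 0 < r),
      ENNReal.ofReal (r ^ s) / μ (closedBall x r)

/-- Axis-parallel closed cube with center `z` and half-side `h`. -/
def cube {d : ℕ} (z : EuclideanSpace ℝ (Fin d)) (h : ℝ) : Set (EuclideanSpace ℝ (Fin d)) :=
  {x | ∀ i, |x i - z i| ≤ h}

/-!
Let `C` be a cube of half-side `h` and `C'` the concentric cube of half-side `h / 2`. Almost every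
point of `C'` lies in infinitely many `B_i`, hence in one of radius at most `h / 4`, and such a ball
lies in `C`. Vitali's covering lemma, applied to the tripled balls `3 B_i`, extracts a subfamily
with disjoint `3 B_i` whose enlargements `15 B_i` cover almost all of `C'`. So the balls of the
subfamily have total volume at least `15⁻ᵈ λ(C') = 30⁻ᵈ λ(C)`, and a finite part of it has at least
half of that.
-/

section Slimsup

variable {X : Type*} {A : ℕ → Set X}

theorem mem_slimsup_iff {y : X} : y ∈ slimsup A ↔ ∃ᶠ i in atTop, y ∈ A i := by
  simp [slimsup, frequently_atTop]

theorem slimsup_subset_iUnion : slimsup A ⊆ ⋃ i, A i := fun _ hy =>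
  let ⟨i, hi⟩ := (mem_slimsup_iff.1 hy).exists
  mem_iUnion.2 ⟨i, hi⟩

theorem measurableSet_slimsup [MeasurableSpace X] (hA : ∀ i, MeasurableSet (A i)) :
    MeasurableSet (slimsup A) :=
  .iInter fun _ => .iUnion fun i => .iUnion fun _ => hA i

end Slimsup

theorem exists_pairwiseDisjoint_covering_slimsup_inter {α : Type*} [PseudoMetricSpace α]
    {x : ℕ → α} {r : ℕ → ℝ} (hr : Tendsto r atTop (nhds 0)) (s : Set α) {R : ℝ}
    (hR : 0 < R) :
    ∃ u : Set ℕ, (∀ i ∈ u, r i ≤ R ∧ (closedBall (x i) (r i) ∩ s).Nonempty) ∧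
      u.PairwiseDisjoint (fun i => closedBall (x i) (3 * r i)) ∧
      slimsup (fun i => closedBall (x i) (r i)) ∩ s ⊆ ⋃ i ∈ u, closedBall (x i) (15 * r i) := by
  set t := {i | r i ≤ R ∧ (closedBall (x i) (r i) ∩ s).Nonempty}
  obtain ⟨u, hut, hdisj, hcov⟩ :=
    Vitali.exists_disjoint_subfamily_covering_enlargement_closedBall t x (fun i => 3 * r i)
      (3 * R) (fun i hi => by linarith [hi.1]) 5 (by norm_num)
  refine ⟨u, hut, hdisj, fun y ⟨hy, hys⟩ => ?_⟩
  obtain ⟨i, hiy, hiR⟩ := ((mem_slimsup_iff.1 hy).and_eventually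
    (hr.eventually (ge_mem_nhds hR))).exists
  have hri : 0 ≤ r i := dist_nonneg.trans hiy
  obtain ⟨b, hbu, hib⟩ := hcov i ⟨hiR, y, hiy, hys⟩
  refine mem_biUnion hbu ?_
  rw [← mul_assoc, show (5 : ℝ) * 3 = 15 by norm_num] at hib
  exact hib (closedBall_subset_closedBall (by linarith) hiy)

section AddHaar

variable {E : Type*} [NormedAddCommGroup E] [NormedSpace ℝ E] [MeasurableSpace E]
  [BorelSpace E] [FiniteDimensional ℝ E] (μ : Measure E) [μ.IsAddHaarMeasure]

theorem addHaar_closedBall_mul_eq (x : E) {c : ℝ} (hc : 0 < c) (ρ : ℝ) :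
    μ (closedBall x (c * ρ)) = ENNReal.ofReal (c ^ Module.finrank ℝ E) * μ (closedBall x ρ) := by
  rcases lt_or_ge ρ 0 with hρ | hρ
  · rw [closedBall_eq_empty.2 hρ, closedBall_eq_empty.2 (mul_neg_of_pos_of_neg hc hρ)]
    simp
  · rw [Measure.addHaar_closedBall_mul μ x hc.le hρ, ← Measure.addHaar_closedBall_center μ x]

theorem measure_le_mul_tsum_of_subset_biUnion_closedBall {ι : Type*} {s : Set E} {u : Set ι}
    (hu : u.Countable) {x : ι → E} {r : ι → ℝ} {c : ℝ} (hc : 0 < c)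
    (hs : s ⊆ ⋃ i ∈ u, closedBall (x i) (c * r i)) :
    μ s ≤ ENNReal.ofReal (c ^ Module.finrank ℝ E) * ∑' i : u, μ (closedBall (x i) (r i)) :=
  calc μ s ≤ ∑' i : u, μ (closedBall (x i) (c * r i)) := (measure_mono hs).trans
        (measure_biUnion_le μ hu _)
    _ = _ := by simp only [addHaar_closedBall_mul_eq μ _ hc, ENNReal.tsum_mul_left]

end AddHaar

section Cube

variable {d : ℕ}

theorem abs_sub_apply_le_dist (w y : EuclideanSpace ℝ (Fin d)) (j : Fin d) :
    |w j - y j| ≤ dist w y := by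
  simpa [dist_eq_norm] using PiLp.norm_apply_le (w - y) j

theorem cube_mono (z : EuclideanSpace ℝ (Fin d)) {a b : ℝ} (hab : a ≤ b) :
    cube z a ⊆ cube z b :=
  fun _ hy i => (hy i).trans hab

theorem closedBall_subset_cube_of_inter_nonempty {y z : EuclideanSpace ℝ (Fin d)} {ρ a : ℝ}
    (h : (closedBall y ρ ∩ cube z a).Nonempty) : closedBall y ρ ⊆ cube z (a + 2 * ρ) := by
  obtain ⟨p, hp, hpa⟩ := h
  intro w hw i
  calc |w i - z i| ≤ |w i - p i| + |p i - z i| := abs_sub_le _ _ _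
    _ ≤ dist w p + a := add_le_add (abs_sub_apply_le_dist w p i) (hpa i)
    _ ≤ a + 2 * ρ := by linarith [dist_triangle_right w p y, mem_closedBall.1 hw,
        mem_closedBall.1 hp]

theorem cube_eq_preimage_pi (z : EuclideanSpace ℝ (Fin d)) (h : ℝ) :
    cube z h = (MeasurableEquiv.toLp 2 (Fin d → ℝ)).symm ⁻¹'
      univ.pi fun i => Icc (z i - h) (z i + h) := by
  ext y
  simp only [cube, mem_ofPred_eq, mem_preimage, MeasurableEquiv.coe_toLp_symm, mem_univ_pi,
    mem_Icc, abs_le]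
  exact forall_congr' fun i => by constructor <;> rintro ⟨h₁, h₂⟩ <;> constructor <;> linarith

theorem volume_cube (z : EuclideanSpace ℝ (Fin d)) {h : ℝ} (hh : 0 ≤ h) :
    volume (cube z h) = ENNReal.ofReal ((2 * h) ^ d) := by
  rw [cube_eq_preimage_pi,
    (EuclideanSpace.volume_preserving_symm_measurableEquiv_toLp (Fin d)).measure_preimage
      (MeasurableSet.univ_pi fun _ => measurableSet_Icc).nullMeasurableSet, volume_pi_pi]
  simp only [Real.volume_Icc, add_sub_sub_cancel, ← two_mul, Finset.prod_const, Finset.card_univ,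
    Fintype.card_fin, ENNReal.ofReal_pow (by positivity : (0 : ℝ) ≤ 2 * h)]

theorem unitCube_eq_cube : unitCube d = cube (WithLp.toLp 2 fun _ => 1 / 2) (1 / 2) := by
  ext y
  simp only [unitCube, cube, mem_ofPred_eq, mem_Icc, abs_le]
  exact forall_congr' fun i => by constructor <;> rintro ⟨h₁, h₂⟩ <;> constructor <;> linarith

theorem volume_unitCube : volume (unitCube d) = 1 := by
  rw [unitCube_eq_cube, volume_cube _ (by norm_num)]
  norm_num

theorem ofReal_mul_volume_cube_lt_of_volume_half_cube_le (z : EuclideanSpace ℝ (Fin d))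
    {c h : ℝ} {S : ℝ≥0∞} (hc : 0 < c) (hh : 0 < h)
    (hS : volume (cube z (h / 2)) ≤ ENNReal.ofReal (c ^ d) * S) :
    ENNReal.ofReal (1 / (2 * (2 * c) ^ d)) * volume (cube z h) < S := by
  rw [volume_cube z (by positivity), mul_div_cancel₀ h two_ne_zero] at hS
  calc ENNReal.ofReal (1 / (2 * (2 * c) ^ d)) * volume (cube z h)
      = ENNReal.ofReal (h ^ d / c ^ d) / 2 := by
        rw [volume_cube z hh.le, ← ENNReal.ofReal_mul (by positivity), ← ENNReal.ofReal_ofNat 2,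
          ← ENNReal.ofReal_div_of_pos two_pos, mul_pow, mul_pow]
        congr 1
        field_simp
    _ < ENNReal.ofReal (h ^ d / c ^ d) :=
        ENNReal.half_lt_self (by simp; positivity) ENNReal.ofReal_ne_top
    _ ≤ S := by
        rw [ENNReal.ofReal_div_of_pos (by positivity)]
        exact ENNReal.div_le_of_le_mul' hS

end Cube

theorem measure_inter_eq_of_subset_of_measure_eq {α : Type*} [MeasurableSpace α] {μ : Measure α}
    {s t u : Set α} (hst : s ⊆ t) (hμ : μ s = μ t) (hs : NullMeasurableSet s μ) (ht : μ t ≠ ∞)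
    (hut : u ⊆ t) : μ (s ∩ u) = μ u := by
  have hst' : s =ᵐ[μ] t := ae_eq_of_subset_of_measure_ge hst hμ.ge hs ht
  rw [measure_congr (hst'.inter (EventuallyEq.refl _ u)), inter_eq_right.2 hut]

theorem exists_injective_fin_lt_sum_of_lt_tsum {α : Type*} {u : Set α} {f : α → ℝ≥0∞}
    {a : ℝ≥0∞} (ha : a < ∑' i : u, f i) :
    ∃ (k : ℕ) (n : Fin k → α), Function.Injective n ∧ (∀ j, n j ∈ u) ∧ a < ∑ j, f (n j) := by
  rw [ENNReal.tsum_eq_iSup_sum] at ha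
  obtain ⟨F, hF⟩ := lt_iSup_iff.1 ha
  refine ⟨F.card, fun j => F.equivFin.symm j, ?_, fun j => (F.equivFin.symm j : u).2, ?_⟩
  · exact Subtype.val_injective.comp (Subtype.val_injective.comp F.equivFin.symm.injective)
  · rwa [Equiv.sum_comp F.equivFin.symm (fun i => f i), Finset.sum_coe_sort F (fun i => f i)]

theorem exists_disjoint_subfamily_filling_cube_general
    (d : ℕ) (x : ℕ → EuclideanSpace ℝ (Fin d)) (r : ℕ → ℝ)
    (hBcube : ∀ i, closedBall (x i) (r i) ⊆ unitCube d)
    (hdiam : Tendsto r atTop (nhds 0))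
    (hfull : volume (slimsup fun i => closedBall (x i) (r i)) = 1) :
    ∃ κ₂ : ℝ, 0 < κ₂ ∧
      ∀ (z : EuclideanSpace ℝ (Fin d)) (h : ℝ), 0 < h → cube z h ⊆ unitCube d →
        ∃ (k : ℕ) (n : Fin k → ℕ), Function.Injective n ∧
          (∀ j, closedBall (x (n j)) (r (n j)) ⊆ cube z h) ∧
          (∀ j j', j ≠ j' →
            Disjoint (closedBall (x (n j)) (3 * r (n j)))
              (closedBall (x (n j')) (3 * r (n j')))) ∧
          ENNReal.ofReal κ₂ * volume (cube z h) ≤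
            ∑ j : Fin k, volume (closedBall (x (n j)) (r (n j))) := by
  refine ⟨1 / (2 * (2 * 15) ^ d), by positivity, fun z h hh hsub => ?_⟩
  obtain ⟨u, hu, hdisj, hcover⟩ := exists_pairwiseDisjoint_covering_slimsup_inter (x := x) hdiam
    (cube z (h / 2)) (by positivity : 0 < h / 4)
  have hfull' : volume ((slimsup fun i => closedBall (x i) (r i)) ∩ cube z (h / 2)) =
      volume (cube z (h / 2)) :=
    measure_inter_eq_of_subset_of_measure_eq (slimsup_subset_iUnion.trans (iUnion_subset hBcube))
      (hfull.trans volume_unitCube.symm)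
      (measurableSet_slimsup fun _ => measurableSet_closedBall).nullMeasurableSet
      (by simp [volume_unitCube]) ((cube_mono z (by linarith)).trans hsub)
  have hcov := measure_le_mul_tsum_of_subset_biUnion_closedBall volume u.to_countable
    (by norm_num : (0 : ℝ) < 15) hcover
  rw [hfull', finrank_euclideanSpace_fin] at hcov
  obtain ⟨k, n, hn, hnu, hsum⟩ :=
    exists_injective_fin_lt_sum_of_lt_tsum (f := fun i => volume (closedBall (x i) (r i)))
      (ofReal_mul_volume_cube_lt_of_volume_half_cube_le z (by norm_num) hh hcov)
  refine ⟨k, n, hn, fun j => ?_, fun j j' hjj' => hdisj (hnu j) (hnu j') (hn.ne hjj'), hsum.le⟩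
  obtain ⟨hrj, hmeet⟩ := hu _ (hnu j)
  exact (closedBall_subset_cube_of_inter_nonempty hmeet).trans (cube_mono z (by linarith))

/-- Lemma 4.1 (after Beresnevich–Velani): if the balls `B_i = B(x_i, r_i) ⊆ [0,1]^d` have
radii tending to `0` and `λ(limsup B_i) = 1`, then there is `κ₂ > 0` such that every
axis-parallel closed cube `C ⊆ [0,1]^d` contains a finite subfamily of the `B_i` with the
tripled balls pairwise disjoint and total volume at least `κ₂ λ(C)`. -/
theorem exists_disjoint_subfamily_filling_cube
    (d : ℕ) (x : ℕ → EuclideanSpace ℝ (Fin d)) (r : ℕ → ℝ)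
    (hr : ∀ i, 0 < r i)
    (hBcube : ∀ i, closedBall (x i) (r i) ⊆ unitCube d)
    (hdiam : Tendsto r atTop (nhds 0))
    (hfull : volume (slimsup fun i => closedBall (x i) (r i)) = 1) :
    ∃ κ₂ : ℝ, 0 < κ₂ ∧
      ∀ (z : EuclideanSpace ℝ (Fin d)) (h : ℝ), 0 < h → cube z h ⊆ unitCube d →
        ∃ (k : ℕ) (n : Fin k → ℕ), Function.Injective n ∧
          (∀ j, closedBall (x (n j)) (r (n j)) ⊆ cube z h) ∧
          (∀ j j', j ≠ j' →
            Disjoint (closedBall (x (n j)) (3 * r (n j)))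
              (closedBall (x (n j')) (3 * r (n j')))) ∧
          ENNReal.ofReal κ₂ * volume (cube z h) ≤
            ∑ j : Fin k, volume (closedBall (x (n j)) (r (n j))) :=
  exists_disjoint_subfamily_filling_cube_general d x r hBcube hdiam hfull
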